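/- arXiv:1304.0785 — 2 statements merged into one kernel-verified Lean document; each statement's English description precedes it below -/
import Mathlib

section
/- Let F be an infinite field and α an ordinal (or index set) with α ≥ 2. Let V = {s ∈ F^α : s_i ≠ 0 for only finitely many i} be the weak Cartesian space. Then the hyperplane w = {s ∈ V : s_0 + 2 = s_1 + 2·Σ_{i>1} s_i} is not contained in any finite union of hyperplanes q_i = {s ∈ V : s_i + 1 = Σ_{j≠i} s_j} (i in a finite set) together with finitely many hyperplanes p of the form {s ∈ V : t + Σ_i r_i s_i = 0} with r_0 ≠ 0 and r_j = 0 for some j > 0. -/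
/-!
Each covering set meets `w` in a proper affine subspace: the point `-2·e₀` of `w` lies on no
`q_i`, and for a hyperplane `p` with `r₀ ≠ 0 = r_j` the affine form of `p` is nonconstant along
the direction `e₀ + e₁` (if `j = e₁`) or `2e₀ + e_j` (otherwise) of `w`. Over an infinite field
finitely many affine forms, each nonzero somewhere on a hyperplane, have a common nonzero point
on it: after homogenizing to linear forms on `F × V` this is the fact that a vector space over an
infinite field is not a finite union of proper subspaces.
-/

namespace AffineMap

variable {K M ι : Type*} [Field K] [AddCommGroup M] [Module K M]

def homogenize (f : M →ᵃ[K] K) : K × M →ₗ[K] K :=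
  f 0 • LinearMap.fst K K M + f.linear ∘ₗ LinearMap.snd K K M

theorem homogenize_apply (f : M →ᵃ[K] K) {c : K} (hc : c ≠ 0) (y : M) :
    f.homogenize (c, y) = c * f (c⁻¹ • y) := by
  rw [f.decomp]
  simp [homogenize, mul_add, hc, add_comm, mul_comm]

@[simp]
theorem homogenize_apply_one (f : M →ᵃ[K] K) (x : M) : f.homogenize (1, x) = f x := by
  simp [homogenize_apply f one_ne_zero]

theorem exists_eq_zero_forall_ne_zero [Infinite K] [Finite ι] (g : M →ᵃ[K] K)
    (f : ι → M →ᵃ[K] K) (hg : ∃ x, g x = 0) (hf : ∀ i, ∃ x, g x = 0 ∧ f i x ≠ 0) :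
    ∃ x, g x = 0 ∧ ∀ i, f i x ≠ 0 := by
  -- `fst` is added to the family so that the common point can be dehomogenized.
  let φ : Option ι → Module.Dual K (K × M) :=
    fun o => o.elim (LinearMap.fst K K M) fun i => (f i).homogenize
  obtain ⟨⟨c, y⟩, hker, hne⟩ :=
    Module.Dual.exists_forall_mem_ne_zero_of_forall_exists (LinearMap.ker g.homogenize) φ <| by
      rintro (_ | i)
      · obtain ⟨x, hx⟩ := hg
        exact ⟨(1, x), by simp [hx], one_ne_zero⟩
      · obtain ⟨x, hgx, hfx⟩ := hf i
        exact ⟨(1, x), by simp [hgx], by simpa [φ] using hfx⟩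
  have hc : c ≠ 0 := hne none
  refine ⟨c⁻¹ • y, ?_, fun i => ?_⟩
  · simpa [homogenize_apply g hc, hc] using hker
  · simpa [φ, homogenize_apply _ hc, hc] using hne (some i)

theorem exists_eq_zero_ne_zero_of_linear_ne_zero (g f : M →ᵃ[K] K) {x : M}
    (hx : g x = 0) (d : M) (hgd : g.linear d = 0) (hfd : f.linear d ≠ 0) :
    ∃ y, g y = 0 ∧ f y ≠ 0 := by
  by_cases hfx : f x = 0
  · refine ⟨d +ᵥ x, ?_, ?_⟩ <;> rw [map_vadd] <;> simp [hx, hgd, hfx, hfd]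
  · exact ⟨x, hx, hfx⟩

end AffineMap

theorem Finsupp.sum_support_sdiff {α M : Type*} [DecidableEq α] [AddCommGroup M]
    (s : α →₀ M) (A : Finset α) :
    ∑ i ∈ s.support \ A, s i = ∑ i ∈ s.support, s i - ∑ i ∈ A, s i := by
  have h_union : ∑ i ∈ s.support ∪ A, s i = ∑ i ∈ s.support, s i :=
    (Finset.sum_subset Finset.subset_union_left fun i _ hi => by simpa using hi).symm
  rw [eq_sub_iff_add_eq, ← h_union, ← Finset.sum_sdiff Finset.subset_union_right,
    Finset.union_sdiff_right]

namespace WeakSpace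

open Finsupp

variable {F α : Type*} [Field F]

noncomputable section

def totalSum : (α →₀ F) →ₗ[F] F := lsum F fun _ => LinearMap.id

-- Affine forms whose zero sets are the hyperplanes `w`, `q_i` and `p` of the statement.
def wForm (e0 e1 : α) : (α →₀ F) →ᵃ[F] F :=
  LinearMap.toAffineMap (lapply e0 - lapply e1 - (2 : F) • (totalSum - lapply e0 - lapply e1)) +
    AffineMap.const F _ 2

def qForm (i : α) : (α →₀ F) →ᵃ[F] F :=
  LinearMap.toAffineMap (lapply i - (totalSum - lapply i)) + AffineMap.const F _ 1

def pForm (t : F) (r : α →₀ F) : (α →₀ F) →ᵃ[F] F :=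
  LinearMap.toAffineMap (∑ i ∈ r.support, r i • lapply i) + AffineMap.const F _ t

end

theorem totalSum_apply (s : α →₀ F) : totalSum s = ∑ i ∈ s.support, s i := by
  simp [totalSum, Finsupp.sum]

@[simp]
theorem totalSum_single (a : α) (c : F) : totalSum (single a c) = c := by
  simp [totalSum]

theorem wForm_apply [DecidableEq α] {e0 e1 : α} (h01 : e0 ≠ e1) (s : α →₀ F) :
    wForm e0 e1 s = s e0 + 2 - (s e1 + 2 * ∑ i ∈ s.support \ {e0, e1}, s i) := by
  simp only [wForm, AffineMap.coe_add, Pi.add_apply, LinearMap.coe_toAffineMap,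
    AffineMap.const_apply, LinearMap.sub_apply, LinearMap.smul_apply, lapply_apply,
    totalSum_apply, Finsupp.sum_support_sdiff, Finset.sum_pair h01, smul_eq_mul]
  ring

theorem qForm_apply [DecidableEq α] (i : α) (s : α →₀ F) :
    qForm i s = s i + 1 - ∑ j ∈ s.support \ {i}, s j := by
  simp only [qForm, AffineMap.coe_add, Pi.add_apply, LinearMap.coe_toAffineMap,
    AffineMap.const_apply, LinearMap.sub_apply, lapply_apply, totalSum_apply,
    Finsupp.sum_support_sdiff, Finset.sum_singleton]
  ring

theorem pForm_apply (t : F) (r s : α →₀ F) :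
    pForm t r s = t + ∑ i ∈ r.support, r i * s i := by
  simp [pForm, add_comm]

@[simp]
theorem pForm_linear_single (t : F) (r : α →₀ F) (a : α) (c : F) :
    (pForm t r).linear (single a c) = r a * c := by
  classical
  simp +contextual [pForm, single_apply]

theorem wForm_single_neg_two {e0 e1 : α} (h01 : e0 ≠ e1) :
    wForm e0 e1 (single e0 (-2 : F)) = 0 := by
  simp [wForm, h01.symm]

theorem qForm_single_neg_two_ne_zero [CharZero F] (e0 i : α) :
    qForm i (single e0 (-2 : F)) ≠ 0 := by
  by_cases h : e0 = i <;> simp [qForm, h] <;> norm_num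

theorem exists_wForm_eq_zero_pForm_ne_zero [CharZero F] {e0 e1 j : α} (h01 : e0 ≠ e1)
    (t : F) {r : α →₀ F} (hr0 : r e0 ≠ 0) (hj : j ≠ e0) (hrj : r j = 0) :
    ∃ s, wForm e0 e1 s = 0 ∧ pForm t r s ≠ 0 := by
  have line := AffineMap.exists_eq_zero_ne_zero_of_linear_ne_zero (wForm e0 e1) (pForm t r)
    (x := single e0 (-2)) (wForm_single_neg_two h01)
  by_cases h1 : j = e1
  · subst h1
    refine line (single e0 (1 : F) + single j 1) ?_ ?_
    · simp [wForm, h01, h01.symm]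
    · simpa [hrj] using hr0
  · refine line (single e0 (2 : F) + single j 1) ?_ ?_
    · simp [wForm, h01.symm, hj.symm, Ne.symm h1]
    · simpa [hrj] using hr0

end WeakSpace

/-- In the weak space of finite-support sequences over a field of
characteristic 0, the hyperplane `w = {s : s₀ + 2 = s₁ + 2·Σ_{i∉{0,1}} s_i}` is
not covered by finitely many hyperplanes `q_i = {s : s_i + 1 = Σ_{j≠i} s_j}`
together with finitely many hyperplanes `{s : t + Σ r_i s_i = 0}` having
`r₀ ≠ 0` and some vanishing coefficient `r_j = 0`, `j ≠ 0`. -/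
theorem stmt3 (F : Type*) [Field F] [CharZero F] (α : Type*) [DecidableEq α]
    (e0 e1 : α) (h01 : e0 ≠ e1)
    (I : Finset α) (n : ℕ) (t : Fin n → F) (r : Fin n → (α →₀ F))
    (hr0 : ∀ k, r k e0 ≠ 0) (hrj : ∀ k, ∃ j, j ≠ e0 ∧ r k j = 0) :
    ¬ ({s : α →₀ F | s e0 + 2 = s e1 + 2 * ∑ i ∈ s.support \ {e0, e1}, s i} ⊆
        (⋃ i ∈ I, {s : α →₀ F | s i + 1 = ∑ j ∈ s.support \ {i}, s j}) ∪
        (⋃ k : Fin n, {s : α →₀ F | t k + ∑ i ∈ (r k).support, r k i * s i = 0})) := by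
  intro hsub
  let forms : I ⊕ Fin n → (α →₀ F) →ᵃ[F] F :=
    Sum.elim (fun i => WeakSpace.qForm i) (fun k => WeakSpace.pForm (t k) (r k))
  obtain ⟨s, hsw, hs⟩ := AffineMap.exists_eq_zero_forall_ne_zero (WeakSpace.wForm e0 e1) forms
    ⟨_, WeakSpace.wForm_single_neg_two h01⟩ <| by
    rintro (i | k)
    · exact ⟨_, WeakSpace.wForm_single_neg_two h01, WeakSpace.qForm_single_neg_two_ne_zero e0 i⟩
    · obtain ⟨j, hj, hrj⟩ := hrj k
      exact WeakSpace.exists_wForm_eq_zero_pForm_ne_zero h01 (t k) (hr0 k) hj hrj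
  rw [WeakSpace.wForm_apply h01, sub_eq_zero] at hsw
  rcases hsub hsw with hq | hp
  · obtain ⟨i, hi, hqi⟩ := Set.mem_iUnion₂.mp hq
    exact hs (.inl ⟨i, hi⟩) (by simpa [forms, WeakSpace.qForm_apply, sub_eq_zero] using hqi)
  · obtain ⟨k, hpk⟩ := Set.mem_iUnion.mp hp
    exact hs (.inr k) (by simpa [forms, WeakSpace.pForm_apply] using hpk)
end

section
/- Let F be a field of characteristic 0, α ≥ 2, and V the weak space of finite-support sequences in F^α based at 0. Let y = {s ∈ V : s_0 + 1 = Σ_{i>0} s_i}. Then for every s ∈ V, the singleton {s} is the intersection C_1({r}) ∩ C_0({t}) of cylindrifications of singletons of elements of y, where r = (s_0, s_0 + 1 − Σ_{i>1} s_i, s_2, s_3, …) and t = (Σ_{i>0} s_i − 1, s_1, s_2, …) both belong to y; here C_i(X) = {u ∈ V : ∃v ∈ X, u_j = v_j for all j ≠ i}. -/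
/-! Writing `T v = Σᵢ vᵢ`, the equation of `y` reads `2 v_{e0} + 1 = T v`, and updating one
coordinate shifts `T` by the change of that coordinate, so both memberships become linear
identities. Since `r` and `t` agree with `s` off the distinct coordinates `e1` and `e0`, the two
cylinders meet in `s` alone. -/

open Finset

namespace Finsupp

variable {α M : Type*}

theorem sum_support_sdiff_eq_sub [AddCommGroup M] [DecidableEq α] (v : α →₀ M) (A : Finset α) :
    ∑ i ∈ v.support \ A, v i = (v.sum fun _ a => a) - ∑ i ∈ A, v i := by
  have hA : ∑ i ∈ v.support ∩ A, v i = ∑ i ∈ A, v i :=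
    sum_subset inter_subset_right fun i hiA hi =>
      notMem_support_iff.1 fun hv => hi (mem_inter.2 ⟨hv, hiA⟩)
  rw [eq_sub_iff_add_eq, ← hA, add_comm, sum_inter_add_sum_sdiff]
  rfl

theorem sum_update_id [AddCommGroup M] (v : α →₀ M) (i : α) (a : M) :
    ((v.update i a).sum fun _ b => b) = (v.sum fun _ b => b) - v i + a := by
  rw [sub_add_eq_add_sub, eq_sub_iff_add_eq]
  exact v.sum_update_add i a (fun _ b => b) (fun _ => rfl) (fun _ _ _ => rfl)

def cylindrify [Zero M] (i : α) (X : Set (α →₀ M)) : Set (α →₀ M) :=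
  {u | ∃ v ∈ X, ∀ j, j ≠ i → u j = v j}

theorem singleton_eq_cylindrify_inter_cylindrify [Zero M] {i k : α} (hik : i ≠ k)
    {s r t : α →₀ M} (hr : ∀ j, j ≠ i → r j = s j) (ht : ∀ j, j ≠ k → t j = s j) :
    ({s} : Set (α →₀ M)) = cylindrify i {r} ∩ cylindrify k {t} := by
  ext u
  constructor
  · rintro rfl
    exact ⟨⟨r, rfl, fun j hj => (hr j hj).symm⟩, ⟨t, rfl, fun j hj => (ht j hj).symm⟩⟩
  · rintro ⟨⟨_, rfl, hur⟩, ⟨_, rfl, hut⟩⟩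
    ext j
    rcases eq_or_ne j i with rfl | hji
    · rw [hut j hik, ht j hik]
    · rw [hur j hji, hr j hji]

end Finsupp

open Finsupp in
theorem stmt4_general (F : Type*) [Field F] (α : Type*) [DecidableEq α]
    (e0 e1 : α) (h01 : e0 ≠ e1) (s : α →₀ F) :
    let y : Set (α →₀ F) := {v | v e0 + 1 = ∑ i ∈ v.support \ {e0}, v i}
    let C : α → Set (α →₀ F) → Set (α →₀ F) :=
      fun i X => {u | ∃ v ∈ X, ∀ j, j ≠ i → u j = v j}
    let r : α →₀ F := s.update e1 (s e0 + 1 - ∑ i ∈ s.support \ {e0, e1}, s i)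
    let t : α →₀ F := s.update e0 ((∑ i ∈ s.support \ {e0}, s i) - 1)
    r ∈ y ∧ t ∈ y ∧ ({s} : Set (α →₀ F)) = C e1 {r} ∩ C e0 {t} := by
  intro y C r t
  have hr : ∀ j, j ≠ e1 → r j = s j := fun j hj => by simp [r, update_apply, hj]
  have ht : ∀ j, j ≠ e0 → t j = s j := fun j hj => by simp [t, update_apply, hj]
  refine ⟨?_, ?_, singleton_eq_cylindrify_inter_cylindrify h01.symm hr ht⟩
  · have hr0 : r e0 = s e0 := hr e0 h01
    show r e0 + 1 = ∑ i ∈ r.support \ {e0}, r i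
    rw [sum_support_sdiff_eq_sub, sum_singleton, hr0, sum_update_id, sum_support_sdiff_eq_sub,
      sum_pair h01]
    ring
  · have ht0 : t e0 = ∑ i ∈ s.support \ {e0}, s i - 1 := by
      simp [t, update_apply]
    show t e0 + 1 = ∑ i ∈ t.support \ {e0}, t i
    rw [sum_support_sdiff_eq_sub, sum_singleton, ht0, sum_update_id, sum_support_sdiff_eq_sub,
      sum_singleton]
    ring

/-- Every singleton of the weak space is the intersection of
cylindrifications (in coordinates `e1` and `e0`) of singletons of elements of
`y = {v : v_{e0} + 1 = Σ_{i ≠ e0} v_i}`. -/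
theorem stmt4 (F : Type*) [Field F] [CharZero F] (α : Type*) [DecidableEq α]
    (e0 e1 : α) (h01 : e0 ≠ e1) (s : α →₀ F) :
    let y : Set (α →₀ F) := {v | v e0 + 1 = ∑ i ∈ v.support \ {e0}, v i}
    let C : α → Set (α →₀ F) → Set (α →₀ F) :=
      fun i X => {u | ∃ v ∈ X, ∀ j, j ≠ i → u j = v j}
    let r : α →₀ F := s.update e1 (s e0 + 1 - ∑ i ∈ s.support \ {e0, e1}, s i)
    let t : α →₀ F := s.update e0 ((∑ i ∈ s.support \ {e0}, s i) - 1)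
    r ∈ y ∧ t ∈ y ∧ ({s} : Set (α →₀ F)) = C e1 {r} ∩ C e0 {t} :=
  stmt4_general F α e0 e1 h01 s
end
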